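/- Let α ∈ (0,1], r₁ ∈ ℝ a root of multiplicity at least l+1 of the polynomial P(X) = Xⁿ + p_{n-1}X^{n-1} + ⋯ + p₀ (i.e. P and its first l derivatives vanish at r₁). Then y(t) = (t^α/α)^l · exp(r₁ t^α/α) satisfies ⁿT_α y + p_{n-1}·ⁿ⁻¹T_α y + ⋯ + p₀ y = 0 for all t > 0. -/

import Mathlib

/-!
Substituting `s = t^α / α` turns `T_α` into `d/ds` (the chain rule contributes `t^(α-1)`, which
cancels the factor `t^(1-α)`), and on functions `Q(s) e^{r s}` with `Q` a polynomial, `d/ds` acts as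
`Q ↦ Q' + r Q` on `Q`. Hence the left-hand side equals `(P(D + r₁) X^l)(s) e^{r₁ s}` with `D` the
derivative of polynomials. Since `(X - r₁)^(l+1)` divides `P`, the operator `P(D + r₁)` factors
through `D^(l+1)`, which annihilates `X^l`.
-/

noncomputable def condD (α : ℝ) (f : ℝ → ℝ) : ℝ → ℝ := fun t => t ^ (1 - α) * deriv f t

open Polynomial

namespace Polynomial

variable {R : Type*}

noncomputable def shiftedDerivative [CommSemiring R] (r : R) : Module.End R R[X] :=
  derivative + algebraMap R (Module.End R R[X]) r

theorem aeval_shiftedDerivative_X_sub_C [CommRing R] (r : R) :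
    aeval (shiftedDerivative r) (X - C r) = derivative := by
  simp [shiftedDerivative]

theorem aeval_shiftedDerivative_apply_X_pow_eq_zero [CommRing R] [IsDomain R] [CharZero R]
    {P : R[X]} {r : R} {l : ℕ} (hroot : ∀ j ≤ l, (derivative^[j] P).IsRoot r) :
    aeval (shiftedDerivative r) P (X ^ l) = 0 := by
  rcases eq_or_ne P 0 with rfl | hP
  · simp
  obtain ⟨S, rfl⟩ : (X - C r) ^ (l + 1) ∣ P :=
    (pow_dvd_pow _ (lt_rootMultiplicity_of_isRoot_iterate_derivative hP hroot)).trans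
      (pow_rootMultiplicity_dvd P r)
  rw [mul_comm, map_mul, _root_.map_pow (aeval (shiftedDerivative r)),
    aeval_shiftedDerivative_X_sub_C, Module.End.mul_apply, Module.End.pow_apply,
    iterate_derivative_eq_zero (by simp), map_zero]

theorem aeval_X_pow_add_sum_apply [CommSemiring R] {M : Type*} [AddCommMonoid M] [Module R M]
    {n : ℕ} (p : Fin n → R) (f : Module.End R M) (v : M) :
    aeval f (X ^ n + ∑ i : Fin n, C (p i) * X ^ (i : ℕ)) v
      = (f ^ n) v + ∑ i : Fin n, p i • (f ^ (i : ℕ)) v := by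
  simp [map_sum, LinearMap.sum_apply, Module.End.mul_apply]

end Polynomial

theorem hasDerivAt_eval_mul_exp (Q : ℝ[X]) (r s : ℝ) :
    HasDerivAt (fun s => Q.eval s * Real.exp (r * s))
      ((shiftedDerivative r Q).eval s * Real.exp (r * s)) s := by
  have hexp : HasDerivAt (fun s => Real.exp (r * s)) (Real.exp (r * s) * r) s := by
    simpa using ((hasDerivAt_id s).const_mul r).exp
  have hprod : HasDerivAt (fun s => Q.eval s * Real.exp (r * s)) _ s :=
    (Q.hasDerivAt s).mul hexp
  convert hprod using 1
  simp only [shiftedDerivative, LinearMap.add_apply, Module.algebraMap_end_apply, eval_add,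
    eval_smul, smul_eq_mul]
  ring

theorem hasDerivAt_rpow_div_self {α t : ℝ} (hα : α ≠ 0) (ht : 0 < t) :
    HasDerivAt (fun x => x ^ α / α) (t ^ (α - 1)) t := by
  simpa [mul_div_assoc, mul_div_cancel_left₀ _ hα] using
    (Real.hasDerivAt_rpow_const (p := α) (Or.inl ht.ne')).div_const α

theorem condD_comp_rpow_div_self {α t g' : ℝ} {g : ℝ → ℝ} (hα : α ≠ 0) (ht : 0 < t)
    (hg : HasDerivAt g g' (t ^ α / α)) :
    condD α (fun x => g (x ^ α / α)) t = g' := by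
  have hcancel : t ^ (1 - α) * t ^ (α - 1) = 1 := by
    rw [← Real.rpow_add ht]; norm_num
  have hcomp : HasDerivAt (fun x => g (x ^ α / α)) (g' * t ^ (α - 1)) t :=
    hg.comp t (hasDerivAt_rpow_div_self hα ht)
  rw [condD, hcomp.deriv, mul_left_comm, hcancel, mul_one]

theorem iterate_condD_eval_mul_exp {α : ℝ} (hα : α ≠ 0) (r : ℝ) (Q : ℝ[X]) (k : ℕ) {t : ℝ}
    (ht : 0 < t) :
    (condD α)^[k] (fun x => Q.eval (x ^ α / α) * Real.exp (r * (x ^ α / α))) t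
      = ((shiftedDerivative r ^ k) Q).eval (t ^ α / α) * Real.exp (r * (t ^ α / α)) := by
  induction k generalizing t with
  | zero => simp
  | succ k ih =>
    have hnear : (condD α)^[k] (fun x => Q.eval (x ^ α / α) * Real.exp (r * (x ^ α / α)))
        =ᶠ[nhds t] fun x =>
          ((shiftedDerivative r ^ k) Q).eval (x ^ α / α) * Real.exp (r * (x ^ α / α)) :=
      Filter.eventually_of_mem (isOpen_Ioi.mem_nhds ht) fun x hx => ih hx
    rw [Function.iterate_succ_apply', condD, hnear.deriv_eq, ← condD,
      condD_comp_rpow_div_self hα ht (hasDerivAt_eval_mul_exp _ r _), pow_succ',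
      Module.End.mul_apply]

open Polynomial in
theorem stmt_13 (α : ℝ) (hα : α ∈ Set.Ioc (0:ℝ) 1) (n : ℕ) (p : Fin n → ℝ)
    (r₁ : ℝ) (l : ℕ)
    (hroot : ∀ j ≤ l,
      (Polynomial.derivative^[j] (X ^ n + ∑ i : Fin n, C (p i) * X ^ (i : ℕ))).eval r₁ = 0)
    (t : ℝ) (ht : 0 < t) :
    (condD α)^[n] (fun x => (x ^ α / α) ^ l * Real.exp (r₁ * x ^ α / α)) t
      + ∑ i : Fin n, p i *
          (condD α)^[(i : ℕ)] (fun x => (x ^ α / α) ^ l * Real.exp (r₁ * x ^ α / α)) t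
      = 0 := by
  have hy : (fun x : ℝ => (x ^ α / α) ^ l * Real.exp (r₁ * x ^ α / α))
      = fun x => (X ^ l : ℝ[X]).eval (x ^ α / α) * Real.exp (r₁ * (x ^ α / α)) := by
    simp only [eval_pow, eval_X, mul_div_assoc]
  have hkill := congrArg (eval (t ^ α / α)) (aeval_shiftedDerivative_apply_X_pow_eq_zero hroot)
  rw [aeval_X_pow_add_sum_apply, eval_zero, eval_add, eval_finsetSum] at hkill
  simp only [hy, iterate_condD_eval_mul_exp hα.1.ne' r₁ _ _ ht, ← mul_assoc, ← Finset.sum_mul,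
    ← add_mul, eval_smul, smul_eq_mul] at hkill ⊢
  rw [hkill, zero_mul]
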